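/- arXiv:2208.06126 — 5 statements merged into one kernel-verified Lean document; each statement's English description precedes it below -/
import Mathlib

section
/- Let F be a simple graph all of whose connected components are 2-edge-connected (i.e., each component is connected and remains connected after deleting any single edge). Then for every natural number n, the ordinary Turán number equals the connected Turán number: ex(n,F) = ex_c(n,F). -/
open SimpleGraph

/-- `G` contains a copy of `F`, i.e. a subgraph isomorphic to `F`
(given by an injective graph homomorphism). -/
def ContainsCopy {α β : Type*} (F : SimpleGraph α) (G : SimpleGraph β) : Prop :=
  ∃ f : α ↪ β, ∀ ⦃a b : α⦄, F.Adj a b → G.Adj (f a) (f b)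

/-- The (ordinary) Turán number `ex(n, F)`: the maximum number of edges of an
`F`-free simple graph on `n` vertices. -/
noncomputable def exTuran {α : Type*} (n : ℕ) (F : SimpleGraph α) : ℕ :=
  sSup {m | ∃ G : SimpleGraph (Fin n), ¬ ContainsCopy F G ∧ m = G.edgeSet.ncard}

/-- The connected Turán number `ex_c(n, F)`: the maximum number of edges of a
connected `F`-free simple graph on `n` vertices. -/
noncomputable def exConn {α : Type*} (n : ℕ) (F : SimpleGraph α) : ℕ :=
  sSup {m | ∃ G : SimpleGraph (Fin n), G.Connected ∧ ¬ ContainsCopy F G ∧ m = G.edgeSet.ncard}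

/-- A graph is 2-edge-connected if it is connected and remains connected after
deleting any single edge. -/
def IsTwoEdgeConnected {V : Type*} (G : SimpleGraph V) : Prop :=
  G.Connected ∧ ∀ e ∈ G.edgeSet, (G.deleteEdges {e}).Connected


/-!
A graph `F` whose components are 2-edge-connected has no bridges. Hence joining two vertices
in different components of an `F`-free graph `G` keeps it `F`-free: a copy of `F` using the new
edge `uv` would map the rest of the component containing the preimage of `uv` into `G`, joining
`u` to `v` in `G`. So an edge-maximal `F`-free graph on a nonempty vertex set is connected, and
every `F`-free graph lies below a connected one.
-/

namespace SimpleGraph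

variable {W V : Type*} {F : SimpleGraph W}

lemma not_isBridge_of_components_twoEdgeConnected
    (h : ∀ c : F.ConnectedComponent, IsTwoEdgeConnected (F.induce c.supp))
    {a b : W} (hab : F.Adj a b) : ¬ F.IsBridge s(a, b) := by
  set c := F.connectedComponentMk a
  have ha : a ∈ c.supp := rfl
  have hb : b ∈ c.supp := ConnectedComponent.sound hab.reachable.symm
  let e' : Sym2 c.supp := s(⟨a, ha⟩, ⟨b, hb⟩)
  have hreach := ((h c).2 e' hab).preconnected ⟨a, ha⟩ ⟨b, hb⟩
  let φ : (F.induce c.supp).deleteEdges {e'} →g F.deleteEdges {s(a, b)} :=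
    { toFun := Subtype.val
      map_rel' := fun {x y} hxy => by
        rw [deleteEdges_adj, Set.mem_singleton_iff] at hxy ⊢
        exact ⟨hxy.1, fun hxy' => hxy.2 (Sym2.map.injective Subtype.val_injective hxy')⟩ }
  exact fun hbridge => hbridge (hreach.map φ)

lemma ContainsCopy.of_sup_edge (hF : ∀ ⦃a b⦄, F.Adj a b → ¬ F.IsBridge s(a, b)) {G : SimpleGraph V}
    {u v : V} (huv : ¬ G.Reachable u v) (hcopy : ContainsCopy F (G ⊔ edge u v)) :
    ContainsCopy F G := by
  obtain ⟨f, hf⟩ := hcopy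
  have hinj : ∀ {x y a b : W}, s(f x, f y) = s(f a, f b) → s(x, y) = s(a, b) := fun h =>
    Sym2.map.injective f.injective (by simpa using h)
  refine ⟨f, fun a b hab => ?_⟩
  by_contra hG
  have hfab : s(f a, f b) = s(u, v) := by
    have := hf hab
    simp only [sup_adj, edge_adj, hG, false_or] at this
    grind
  let φ : F.deleteEdges {s(a, b)} →g G :=
    { toFun := f
      map_rel' := fun {x y} hxy => by
        rw [deleteEdges_adj, Set.mem_singleton_iff] at hxy
        refine (hf hxy.1).resolve_right fun hedge => hxy.2 (hinj ?_)
        rw [edge_adj] at hedge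
        rw [hfab, Sym2.eq_iff]
        exact hedge.1 }
  have hreach : G.Reachable (f a) (f b) :=
    (not_not.mp (hF hab)).map φ
  rw [Sym2.eq_iff] at hfab
  rcases hfab with ⟨rfl, rfl⟩ | ⟨rfl, rfl⟩
  exacts [huv hreach, huv hreach.symm]

lemma connected_of_maximal_not_containsCopy [Nonempty V]
    (hF : ∀ ⦃a b⦄, F.Adj a b → ¬ F.IsBridge s(a, b)) {G : SimpleGraph V}
    (hG : Maximal (fun G => ¬ ContainsCopy F G) G) : G.Connected := by
  refine (connected_iff G).mpr ⟨fun u v => ?_, inferInstance⟩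
  by_contra huv
  have hne : u ≠ v := by rintro rfl; exact huv .rfl
  have hle : G ⊔ edge u v ≤ G :=
    hG.2 (fun hcopy => hG.1 (hcopy.of_sup_edge hF huv)) le_sup_left
  exact huv (hle (by simp [edge_adj, hne])).reachable

lemma exists_connected_le_of_not_containsCopy [Finite V] [Nonempty V]
    (hF : ∀ ⦃a b⦄, F.Adj a b → ¬ F.IsBridge s(a, b)) {G : SimpleGraph V} (hG : ¬ ContainsCopy F G) :
    ∃ G', G ≤ G' ∧ G'.Connected ∧ ¬ ContainsCopy F G' := by
  obtain ⟨G', hle, hmax⟩ := Finite.exists_le_maximal (p := fun G => ¬ ContainsCopy F G) hG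
  exact ⟨G', hle, connected_of_maximal_not_containsCopy hF hmax, hmax.1⟩

end SimpleGraph

theorem exTuran_eq_exConn_of_components_twoEdgeConnected_general
    {W : Type*} (F : SimpleGraph W)
    (h : ∀ c : F.ConnectedComponent, IsTwoEdgeConnected (F.induce c.supp)) (n : ℕ) :
    exTuran n F = exConn n F := by
  have hbdd : BddAbove {m | ∃ G : SimpleGraph (Fin n), ¬ ContainsCopy F G ∧ m = G.edgeSet.ncard} :=
    ((Set.finite_range fun G : SimpleGraph (Fin n) => G.edgeSet.ncard).subset
      (by rintro m ⟨G, -, rfl⟩; exact ⟨G, rfl⟩)).bddAbove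
  have hsub : {m | ∃ G : SimpleGraph (Fin n), G.Connected ∧ ¬ ContainsCopy F G ∧
      m = G.edgeSet.ncard} ⊆ {m | ∃ G : SimpleGraph (Fin n), ¬ ContainsCopy F G ∧
      m = G.edgeSet.ncard} := by
    rintro m ⟨G, -, hG, rfl⟩
    exact ⟨G, hG, rfl⟩
  refine le_antisymm (csSup_le' ?_) (csSup_le_csSup' hbdd hsub)
  rintro m ⟨G, hG, rfl⟩
  cases isEmpty_or_nonempty (Fin n)
  · simp [Set.eq_empty_of_isEmpty G.edgeSet]
  obtain ⟨G', hle, hconn, hG'⟩ := exists_connected_le_of_not_containsCopy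
    (fun _ _ => not_isBridge_of_components_twoEdgeConnected h) hG
  exact le_csSup_of_le (hbdd.mono hsub) ⟨G', hconn, hG', rfl⟩
    (Set.ncard_le_ncard (edgeSet_mono hle))

/-- If every connected component of `F` is 2-edge-connected, then the Turán number
equals the connected Turán number for every `n`. -/
theorem exTuran_eq_exConn_of_components_twoEdgeConnected
    {W : Type*} [Fintype W] (F : SimpleGraph W)
    (h : ∀ c : F.ConnectedComponent, IsTwoEdgeConnected (F.induce c.supp)) (n : ℕ) :
    exTuran n F = exConn n F :=
  exTuran_eq_exConn_of_components_twoEdgeConnected_general F h n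
end

section
/- Let T be a tree on k ≥ 4 vertices and let ℓ(T) denote the number of vertices in a longest path of T. Then for every n ≥ ℓ(T), ex_c(n,T) ≥ C(⌈ℓ(T)/2⌉, 2) + ⌊(ℓ(T)−2)/2⌋ · (n − ⌈ℓ(T)/2⌉), where C(m,2) denotes the binomial coefficient m choose 2. -/
open SimpleGraph

/-- `ℓ(G)`: the number of vertices of a longest path in `G`. -/
noncomputable def longestPathCard {V : Type*} (G : SimpleGraph V) : ℕ :=
  sSup {m | ∃ (u v : V) (p : G.Walk u v), p.IsPath ∧ m = p.length + 1}

/-!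
Write `ℓ = ℓ(T)`, `a = ⌈ℓ/2⌉` and `b = ⌊(ℓ-2)/2⌋`, so that `a + b = ℓ - 1` once `ℓ ≥ 2`.
For `ℓ ≥ 4` take the graph `K_b + (K_{a-b} ∪ K̄_{n-a})`: a clique on `a` vertices, `b` of
which are joined to all `n - a` remaining vertices. It is connected, has `C(a,2) + b(n-a)`
edges, and each of its paths has at most `a + b = ℓ - 1` vertices, because every vertex
outside the clique is flanked on the path by hub vertices. Hence it contains no path on `ℓ`
vertices, and no copy of `T`. For `ℓ = 3` the tree is a star with at least three leaves,
which the path `P_n` does not contain; for `ℓ ≤ 2` the bound is `0`.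
-/

open Finset

lemma ncard_edgeSet_le_exConn {α : Type*} {n : ℕ} {F : SimpleGraph α} {G : SimpleGraph (Fin n)}
    (hG : G.Connected) (hF : ¬ ContainsCopy F G) : G.edgeSet.ncard ≤ exConn n F := by
  refine le_csSup ⟨Nat.card (Sym2 (Fin n)), ?_⟩ ⟨G, hG, hF, rfl⟩
  rintro m ⟨G', -, -, rfl⟩
  simpa using Set.ncard_le_ncard (Set.subset_univ G'.edgeSet)

section LongestPath

variable {V : Type*} {G : SimpleGraph V}

lemma bddAbove_setOf_isPath_length_add_one [Finite V] :
    BddAbove {m | ∃ (u v : V) (p : G.Walk u v), p.IsPath ∧ m = p.length + 1} := by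
  have := Fintype.ofFinite V
  refine ⟨Fintype.card V, ?_⟩
  rintro m ⟨u, v, p, hp, rfl⟩
  exact hp.length_lt

lemma SimpleGraph.Walk.IsPath.length_add_one_le_longestPathCard [Finite V] {u v : V}
    {p : G.Walk u v} (hp : p.IsPath) : p.length + 1 ≤ longestPathCard G :=
  le_csSup bddAbove_setOf_isPath_length_add_one ⟨u, v, p, hp, rfl⟩

lemma exists_isPath_longestPathCard_eq_length_add_one [Finite V] [Nonempty V] :
    ∃ (u v : V) (p : G.Walk u v), p.IsPath ∧ longestPathCard G = p.length + 1 :=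
  Nat.sSup_mem (s := {m | ∃ (u v : V) (p : G.Walk u v), p.IsPath ∧ m = p.length + 1})
    ⟨1, Classical.arbitrary V, _, .nil, .nil, rfl⟩ bddAbove_setOf_isPath_length_add_one

lemma four_le_longestPathCard_of_adj [Finite V] {a b c d : V} (hab : G.Adj a b)
    (hbc : G.Adj b c) (hcd : G.Adj c d) (hac : a ≠ c) (had : a ≠ d) (hbd : b ≠ d) :
    4 ≤ longestPathCard G := by
  have hp : (Walk.cons hab (.cons hbc (.cons hcd .nil))).IsPath := by
    simp [Walk.cons_isPath_iff, hab.ne, hbc.ne, hcd.ne, hac, had, hbd]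
  exact hp.length_add_one_le_longestPathCard

lemma SimpleGraph.Walk.IsPath.exists_adj_adj_of_length_eq_two {u v : V} {p : G.Walk u v}
    (hp : p.IsPath) (hlen : p.length = 2) : ∃ x, G.Adj u x ∧ G.Adj x v ∧ u ≠ v := by
  rcases p with _ | @⟨_, x, _, hux, _ | @⟨_, _, _, hxv, _ | _⟩⟩
  all_goals simp only [Walk.length_cons, Walk.length_nil] at hlen
  case cons.cons.nil => exact ⟨x, hux, hxv, by simp_all [Walk.cons_isPath_iff]⟩
  all_goals omega

end LongestPath

lemma not_containsCopy_of_isPath_length_lt {α β : Type*} [Finite α] [Nonempty α]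
    {F : SimpleGraph α} {G : SimpleGraph β}
    (hG : ∀ (u v : β) (p : G.Walk u v), p.IsPath → p.length + 1 < longestPathCard F) :
    ¬ ContainsCopy F G := by
  rintro ⟨f, hf⟩
  obtain ⟨u, v, p, hp, hℓ⟩ := exists_isPath_longestPathCard_eq_length_add_one (G := F)
  let φ : F →g G := ⟨f, fun h => hf h⟩
  have hlt := hG _ _ (p.map φ) (hp.map f.injective)
  rw [Walk.length_map] at hlt
  omega

namespace List

variable {α : Type*} {R : α → α → Prop} {p q : α → Prop}
  [DecidablePred p] [DecidablePred q]

/-- `(L.take 1).countP p` is `1` if the head of `L` satisfies `p` and `0` otherwise: every other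
`p`-element of `L` is preceded by a `q`-element. -/
theorem IsChain.countP_le_countP_add_countP_take_one (hR : ∀ x y, R x y → R y x)
    (hpq : ∀ x y, R x y → p x → q y) :
    ∀ {L : List α}, L.IsChain R → L.countP p ≤ L.countP q + (L.take 1).countP p
  | [], _ | [_], _ => by simp
  | x :: y :: L, h => by
    rw [isChain_cons_cons] at h
    have ih := h.2.countP_le_countP_add_countP_take_one hR hpq
    have hyx : p y → q x := hpq y x (hR x y h.1)
    simp only [countP_cons, take_succ_cons, take_zero] at ih ⊢
    split_ifs at ih ⊢ <;> simp_all <;> omega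

theorem IsChain.countP_le_countP_of_mem (hR : ∀ x y, R x y → R y x)
    (hpq : ∀ x y, R x y → p x → q y) {L : List α} (hL : L.IsChain R) {x : α} (hx : x ∈ L)
    (hpx : ¬ p x) (hqx : ¬ q x) : L.countP p ≤ L.countP q := by
  obtain ⟨s, t, rfl⟩ := append_of_mem hx
  -- read both halves of `L` starting from `x`
  have hs : (x :: s.reverse).IsChain R := by
    have : (s ++ [x]).IsChain R :=
      (show (s ++ [x] ++ t).IsChain R by simpa using hL).left_of_append
    rw [← reverse_concat']
    exact isChain_reverse.mpr (this.imp fun a b h => hR a b h)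
  have h₁ := hs.countP_le_countP_add_countP_take_one hR hpq
  have h₂ := hL.right_of_append.countP_le_countP_add_countP_take_one hR hpq
  simp only [countP_append, countP_cons, countP_reverse, take_succ_cons, take_zero, countP_nil,
    hpx, hqx, decide_false, Bool.false_eq_true, if_false] at h₁ h₂ ⊢
  omega

theorem Nodup.countP_le_card_filter [Fintype α] {L : List α} (hL : L.Nodup) :
    L.countP p ≤ #{x | p x} := by
  classical
  rw [countP_eq_length_filter, ← toFinset_card_of_nodup (hL.filter _)]
  exact card_le_card fun x hx => by simp_all

end List

/-- `K_b + (K_{a-b} ∪ K̄_{n-a})`, with the hubs `K_b` on the vertices below `b` and `K_{a-b}` on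
those from `b` to `a`. -/
def cliqueHubGraph (n a b : ℕ) : SimpleGraph (Fin n) :=
  fromRel fun x y => (x : ℕ) < a ∧ (y : ℕ) < a ∨ (x : ℕ) < b ∧ a ≤ (y : ℕ)

namespace cliqueHubGraph

variable {n a b : ℕ}

instance : DecidableRel (cliqueHubGraph n a b).Adj :=
  fun x y => inferInstanceAs (Decidable (x ≠ y ∧ _))

lemma adj_iff {x y : Fin n} : (cliqueHubGraph n a b).Adj x y ↔ x ≠ y ∧
    ((x : ℕ) < a ∧ (y : ℕ) < a ∨ (x : ℕ) < b ∧ a ≤ (y : ℕ) ∨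
      (y : ℕ) < b ∧ a ≤ (x : ℕ)) := by
  simp only [cliqueHubGraph, fromRel_adj]
  tauto

lemma connected (hb : 0 < b) (hn : 0 < n) : (cliqueHubGraph n a b).Connected := by
  set v₀ : Fin n := ⟨0, hn⟩
  have hv₀ : (v₀ : ℕ) = 0 := rfl
  refine (connected_iff_exists_forall_reachable _).mpr ⟨v₀, fun w => ?_⟩
  by_cases hw : w = v₀
  · rw [hw]
  · exact (adj_iff.mpr ⟨Ne.symm hw, by have := Fin.val_injective.ne hw; omega⟩).reachable

lemma degree_eq (han : a ≤ n) (v : Fin n) :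
    (cliqueHubGraph n a b).degree v =
      if (v : ℕ) < b then n - 1 else if (v : ℕ) < a then a - 1 else b := by
  rw [← card_neighborFinset_eq_degree]
  split_ifs with hvb hva
  · rw [show (cliqueHubGraph n a b).neighborFinset v = univ.erase v by
      ext w
      simp only [mem_neighborFinset, adj_iff, mem_erase, mem_univ, ne_eq, Fin.ext_iff, and_true]
      omega]
    simp
  · rw [show (cliqueHubGraph n a b).neighborFinset v =
        ({w | (w : ℕ) < a} : Finset (Fin n)).erase v by
      ext w
      simp only [mem_neighborFinset, adj_iff, mem_erase, mem_filter, mem_univ, ne_eq,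
        Fin.ext_iff, true_and]
      omega]
    rw [card_erase_of_mem (by simpa using hva), Fin.card_filter_val_lt, min_eq_right han]
  · rw [show (cliqueHubGraph n a b).neighborFinset v = ({w | (w : ℕ) < b} : Finset (Fin n)) by
      ext w
      simp only [mem_neighborFinset, adj_iff, mem_filter, mem_univ, ne_eq, Fin.ext_iff, true_and]
      omega]
    rw [Fin.card_filter_val_lt]
    omega

lemma ncard_edgeSet (hba : b ≤ a) (han : a ≤ n) :
    (cliqueHubGraph n a b).edgeSet.ncard = a.choose 2 + b * (n - a) := by
  set f : ℕ → ℕ := fun i => if i < b then n - 1 else if i < a then a - 1 else b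
  have hsum : ∑ i ∈ range n, f i = 2 * #(cliqueHubGraph n a b).edgeFinset := by
    rw [← Fin.sum_univ_eq_sum_range, ← sum_degrees_eq_twice_card_edges]
    simp [degree_eq han, f]
  have hhub : ∑ i ∈ Ico 0 b, f i = b * (n - 1) := by
    rw [sum_congr rfl (g := fun _ => n - 1) fun i hi => by grind]; simp
  have hclique : ∑ i ∈ Ico b a, f i = (a - b) * (a - 1) := by
    rw [sum_congr rfl (g := fun _ => a - 1) fun i hi => by grind]; simp
  have hrest : ∑ i ∈ Ico a n, f i = (n - a) * b := by
    rw [sum_congr rfl (g := fun _ => b) fun i hi => by grind]; simp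
  rw [range_eq_Ico, ← sum_Ico_consecutive _ (Nat.zero_le a) han,
    ← sum_Ico_consecutive _ (Nat.zero_le b) hba, hhub, hclique, hrest] at hsum
  have hchoose : 2 * a.choose 2 = a * (a - 1) := by
    rw [Nat.choose_two_right, Nat.mul_div_cancel' (Nat.even_mul_pred_self a).two_dvd]
  rw [Set.ncard_eq_toFinset_card', ← edgeFinset]
  rcases Nat.eq_zero_or_pos a with rfl | ha
  · obtain rfl : b = 0 := by omega
    simpa using hsum
  · zify [ha, hba, han, (by omega : 1 ≤ n)] at hsum hchoose ⊢
    nlinarith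

lemma length_add_one_le_of_isPath (hba : b < a) {u v : Fin n}
    {p : (cliqueHubGraph n a b).Walk u v} (hp : p.IsPath) : p.length + 1 ≤ a + b := by
  have hchain := p.isChain_adj_support
  have hnd := hp.support_nodup
  rw [← Walk.length_support]
  generalize p.support = L at hchain hnd
  have hsymm : ∀ x y, (cliqueHubGraph n a b).Adj x y → (cliqueHubGraph n a b).Adj y x :=
    fun _ _ h => h.symm
  have hout : ∀ x y, (cliqueHubGraph n a b).Adj x y → a ≤ (x : ℕ) → (y : ℕ) < b := by
    intro x y h hx; rw [adj_iff] at h; omega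
  have hlen : L.length = L.countP (a ≤ ·.val) + L.countP (·.val < a) := by
    rw [L.length_eq_countP_add_countP (a ≤ ·.val)]; simp
  have hin : L.countP (·.val < a) ≤ a :=
    hnd.countP_le_card_filter.trans (by simp [Fin.card_filter_val_lt])
  have hhub : L.countP (·.val < b) ≤ b :=
    hnd.countP_le_card_filter.trans (by simp [Fin.card_filter_val_lt])
  have hhub_le : L.countP (·.val < b) ≤ L.countP (·.val < a) :=
    List.countP_mono_left fun x _ hx => by simp only [decide_eq_true_eq] at hx ⊢; omega
  -- the path either meets a non-hub clique vertex, or has at most `2b + 1 ≤ a + b` vertices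
  by_cases hc : ∃ x ∈ L, b ≤ (x : ℕ) ∧ (x : ℕ) < a
  · obtain ⟨x, hx, hbx, hxa⟩ := hc
    have houter := hchain.countP_le_countP_of_mem hsymm hout hx (by omega) (by omega)
    omega
  · push Not at hc
    have hsame : L.countP (·.val < a) = L.countP (·.val < b) :=
      List.countP_congr fun x hx => by have := hc x hx; simp only [decide_eq_true_eq]; omega
    have houter := hchain.countP_le_countP_add_countP_take_one hsymm hout
    have hhead : (L.take 1).countP (a ≤ ·.val) ≤ 1 := List.countP_le_length.trans (by simp)
    omega

end cliqueHubGraph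

lemma not_containsCopy_pathGraph {α : Type*} {F : SimpleGraph α} {n : ℕ} {x u v w : α}
    (hu : F.Adj x u) (hv : F.Adj x v) (hw : F.Adj x w) (huv : u ≠ v) (huw : u ≠ w)
    (hvw : v ≠ w) : ¬ ContainsCopy F (pathGraph n) := by
  rintro ⟨f, hf⟩
  have hu' := pathGraph_adj.mp (hf hu)
  have hv' := pathGraph_adj.mp (hf hv)
  have hw' := pathGraph_adj.mp (hf hw)
  have hne := fun y z (h : y ≠ z) => Fin.val_injective.ne (f.injective.ne h)
  have := hne u v huv
  have := hne u w huw
  have := hne v w hvw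
  omega

lemma exists_three_neighbors_of_longestPathCard_eq_three {V : Type*} [Fintype V]
    {G : SimpleGraph V} (hG : G.Connected) (hV : 4 ≤ Fintype.card V)
    (hℓ : longestPathCard G = 3) :
    ∃ x u v w, G.Adj x u ∧ G.Adj x v ∧ G.Adj x w ∧ u ≠ v ∧ u ≠ w ∧ v ≠ w := by
  classical
  have : Nonempty V := hG.nonempty
  obtain ⟨u, v, p, hp, hlen⟩ := exists_isPath_longestPathCard_eq_length_add_one (G := G)
  obtain ⟨x, hux, hxv, huv⟩ := hp.exists_adj_adj_of_length_eq_two (by omega)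
  have hcard : #({u, x, v} : Finset V) < #(univ : Finset V) :=
    card_le_three.trans_lt (by rw [card_univ]; omega)
  obtain ⟨z, -, hz⟩ := exists_mem_notMem_of_card_lt_card hcard
  -- the edge by which a walk from `z` enters `{u, x, v}` must end at `x`, since ending at `u` or
  -- `v` would extend `u x v` to a path on four vertices
  obtain ⟨d, -, hd, hd'⟩ := (hG.preconnected z x).some.exists_boundary_dart
    ({u, x, v} : Set V)ᶜ (by simpa using hz) (by simp)
  rw [Set.mem_compl_iff, not_not] at hd'
  simp only [Set.mem_compl_iff, Set.mem_insert_iff, Set.mem_singleton_iff, not_or] at hd hd'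
  obtain ⟨hdu, hdx, hdv⟩ := hd
  rcases hd' with h | h | h
  · have := four_le_longestPathCard_of_adj (h ▸ d.adj) hux hxv hdx hdv huv
    omega
  · exact ⟨x, u, v, d.fst, hux.symm, hxv, h ▸ d.adj.symm, huv, Ne.symm hdu, Ne.symm hdv⟩
  · have := four_le_longestPathCard_of_adj (h ▸ d.adj) hxv.symm hux.symm hdx hdu huv.symm
    omega

/-- Proposition (longest path construction): for a tree `T` on `k ≥ 4` vertices and
`n ≥ ℓ(T)`, `ex_c(n,T) ≥ C(⌈ℓ(T)/2⌉, 2) + ⌊(ℓ(T)-2)/2⌋ (n - ⌈ℓ(T)/2⌉)`. -/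
theorem exConn_ge_of_longestPath {V : Type*} [Fintype V] (T : SimpleGraph V) (k : ℕ)
    (hk : 4 ≤ k) (hcard : Fintype.card V = k) (hT : T.IsTree)
    (n : ℕ) (hn : longestPathCard T ≤ n) :
    ((longestPathCard T + 1) / 2).choose 2
      + (longestPathCard T - 2) / 2 * (n - (longestPathCard T + 1) / 2) ≤ exConn n T := by
  have : Nonempty V := hT.connected.nonempty
  obtain hℓ | hℓ | hℓ :
      longestPathCard T ≤ 2 ∨ longestPathCard T = 3 ∨ 4 ≤ longestPathCard T := by omega
  · interval_cases longestPathCard T <;> simp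
  · obtain ⟨x, u, v, w, hu, hv, hw, huv, huw, hvw⟩ :=
      exists_three_neighbors_of_longestPathCard_eq_three hT.connected (hcard ▸ hk) hℓ
    obtain ⟨m, rfl⟩ : ∃ m, n = m + 1 := ⟨n - 1, by omega⟩
    have hedges := (pathGraph_connected m).card_vert_le_card_edgeSet_add_one
    rw [Nat.card_eq_fintype_card, Fintype.card_fin, Nat.card_coe_set_eq] at hedges
    calc _ = 1 := by simp [hℓ]
      _ ≤ (pathGraph (m + 1)).edgeSet.ncard := by omega
      _ ≤ exConn (m + 1) T := ncard_edgeSet_le_exConn (pathGraph_connected m)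
        (not_containsCopy_pathGraph hu hv hw huv huw hvw)
  · rw [← cliqueHubGraph.ncard_edgeSet (by omega) (by omega)]
    refine ncard_edgeSet_le_exConn (cliqueHubGraph.connected (by omega) (by omega))
      (not_containsCopy_of_isPath_length_lt fun u v p hp => ?_)
    have := cliqueHubGraph.length_add_one_le_of_isPath (by omega) hp
    omega
end

section
/- Let T be a tree on k ≥ 4 vertices whose (unique) bipartition consists of classes of sizes a and b with a ≤ b. Then for every n ≥ k, ex_c(n,T) ≥ (a−1)(n−a+1). -/
/-!
The complete bipartite graph `K_{a-1, n-a+1}` is connected and has `(a-1)(n-a+1)` edges.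
It contains no copy of `T`: a connected graph has only one proper 2-colouring up to swapping
the colours, so an embedding of `T` would map a whole bipartition class of `T`, which has at
least `a` vertices, into the side with `a - 1` vertices.
-/

open SimpleGraph

open Finset

namespace SimpleGraph

variable {V α β : Type*}

theorem containsCopy_iff_isContained {F : SimpleGraph α} {G : SimpleGraph β} :
    ContainsCopy F G ↔ F ⊑ G :=
  ⟨fun ⟨f, hf⟩ ↦ ⟨⟨⟨f, @hf⟩, f.injective⟩⟩, fun ⟨c⟩ ↦ ⟨c.toEmbedding, fun _ _ ↦ c.toHom.map_adj⟩⟩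

theorem Iso.ncard_edgeSet_eq {G : SimpleGraph V} {G' : SimpleGraph α} (e : G ≃g G') :
    G.edgeSet.ncard = G'.edgeSet.ncard := by
  rw [← Nat.card_coe_set_eq, ← Nat.card_coe_set_eq]
  exact Nat.card_congr e.mapEdgeSet

theorem ncard_edgeSet_le_exConn [Fintype V] {n : ℕ} (hV : Fintype.card V = n)
    {F : SimpleGraph α} {G : SimpleGraph V} (hG : G.Connected) (hF : ¬ ContainsCopy F G) :
    G.edgeSet.ncard ≤ exConn n F := by
  let e := G.overFinIso hV
  have hbdd : BddAbove {m | ∃ H : SimpleGraph (Fin n), H.Connected ∧ ¬ ContainsCopy F H ∧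
      m = H.edgeSet.ncard} := by
    refine (Set.finite_range fun H : SimpleGraph (Fin n) ↦ H.edgeSet.ncard).subset ?_ |>.bddAbove
    rintro _ ⟨H, -, -, rfl⟩
    exact ⟨H, rfl⟩
  refine le_csSup hbdd ⟨_, e.connected_iff.mp hG, ?_, e.ncard_edgeSet_eq⟩
  rwa [containsCopy_iff_isContained, ← isContained_congr_right e, ← containsCopy_iff_isContained]

theorem completeBipartiteGraph_connected [Nonempty α] [Nonempty β] :
    (completeBipartiteGraph α β).Connected := by
  obtain ⟨a⟩ := ‹Nonempty α›
  obtain ⟨b⟩ := ‹Nonempty β›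
  have hb : ∀ v, (completeBipartiteGraph α β).Reachable (.inr b) v := by
    rintro (a' | b')
    · exact (show (completeBipartiteGraph α β).Adj (.inr b) (.inl a') by simp).reachable
    · exact (show (completeBipartiteGraph α β).Adj (.inr b) (.inl a) by simp).reachable.trans
        (show (completeBipartiteGraph α β).Adj (.inl a) (.inr b') by simp).reachable
  exact (connected_iff_exists_forall_reachable _).mpr ⟨_, hb⟩

theorem ncard_edgeSet_completeBipartiteGraph [Finite α] [Finite β] :
    (completeBipartiteGraph α β).edgeSet.ncard = Nat.card α * Nat.card β := by
  rw [Set.ncard_def, encard_edgeSet_completeBipartiteGraph]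
  simp [ENat.card_eq_coe_natCard]

theorem Connected.coloring_eq_or_eq_not {G : SimpleGraph V} (hG : G.Connected)
    (c c' : G.Coloring Bool) : (∀ v, c' v = c v) ∨ ∀ v, c' v = !c v := by
  obtain ⟨v₀⟩ := hG.nonempty
  have hparity : ∀ v, (c v₀ ↔ c v) ↔ (c' v₀ ↔ c' v) := fun v ↦ by
    obtain ⟨p⟩ := hG v₀ v
    rw [← c.even_length_iff_congr p, c'.even_length_iff_congr p]
  by_cases h : c' v₀ = c v₀
  · exact .inl fun v ↦ by grind [hparity v]
  · exact .inr fun v ↦ by grind [hparity v]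

theorem exists_card_fiber_le_of_containsCopy_completeBipartiteGraph [Fintype V] [Fintype α]
    {T : SimpleGraph V} (hT : T.Connected) (c : T.Coloring Bool)
    (h : ContainsCopy T (completeBipartiteGraph α β)) :
    ∃ i, #{v | c v = i} ≤ Fintype.card α := by
  obtain ⟨f, hf⟩ := h
  let c' : T.Coloring Bool := (CompleteBipartiteGraph.bicoloring α β).comp ⟨f, @hf⟩
  have hleft : #{v | c' v = false} ≤ Fintype.card α :=
    calc #{v | c' v = false}
        ≤ #(univ.map .inl : Finset (α ⊕ β)) := by
          refine card_le_card_of_injOn f (fun v hv ↦ ?_) f.injective.injOn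
          rcases hfv : f v with x | y
          · simp
          · simp [c', CompleteBipartiteGraph.bicoloring, Coloring.mk, hfv] at hv
      _ = Fintype.card α := by simp
  rcases hT.coloring_eq_or_eq_not c c' with hc | hc
  · exact ⟨false, by simpa [hc] using hleft⟩
  · exact ⟨true, by simpa [hc] using hleft⟩

end SimpleGraph

theorem exConn_ge_of_bipartition_general {V : Type*} [Fintype V] [DecidableEq V]
    (T : SimpleGraph V) (k a b : ℕ) (hcard : Fintype.card V = k)
    (hT : T.IsTree) (A B : Finset V) (hunion : A ∪ B = Finset.univ) (hdisj : Disjoint A B)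
    (hA : ∀ x ∈ A, ∀ y ∈ A, ¬ T.Adj x y) (hB : ∀ x ∈ B, ∀ y ∈ B, ¬ T.Adj x y)
    (ha : A.card = a) (hb : B.card = b) (hab : a ≤ b)
    (n : ℕ) (hn : k ≤ n) :
    (a - 1) * (n - a + 1) ≤ exConn n T := by
  rcases Nat.lt_or_ge a 2 with ha2 | ha2
  · simp [show a - 1 = 0 by omega]
  have hBA : B = Aᶜ := (IsCompl.of_eq hdisj.eq_bot hunion).compl_eq.symm
  have hak : a + b = k := by
    rw [← ha, ← hb, ← card_union_of_disjoint hdisj, hunion, card_univ, hcard]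
  let c : T.Coloring Bool := Coloring.mk (fun v ↦ v ∈ A) fun _ ↦ by grind [mem_compl]
  have hfree : ¬ ContainsCopy T (completeBipartiteGraph (Fin (a - 1)) (Fin (n - a + 1))) := by
    intro h
    obtain ⟨i, hi⟩ := exists_card_fiber_le_of_containsCopy_completeBipartiteGraph hT.connected c h
    -- the colour classes of `c` are `B` (`false`) and `A` (`true`)
    cases i <;> simp [c, Coloring.mk, ← sdiff_eq_filter, ← compl_eq_univ_sdiff, ← hBA] at hi <;> omega
  have : Nonempty (Fin (a - 1)) := ⟨⟨0, by omega⟩⟩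
  calc (a - 1) * (n - a + 1)
      = (completeBipartiteGraph (Fin (a - 1)) (Fin (n - a + 1))).edgeSet.ncard := by
        simp [ncard_edgeSet_completeBipartiteGraph]
    _ ≤ exConn n T :=
        ncard_edgeSet_le_exConn (by simp only [Fintype.card_sum, Fintype.card_fin]; omega) completeBipartiteGraph_connected hfree

/-- Proposition (bipartition construction): if the bipartition of a tree `T` on `k ≥ 4`
vertices has classes of sizes `a ≤ b`, then for `n ≥ k`, `ex_c(n,T) ≥ (a-1)(n-a+1)`. -/
theorem exConn_ge_of_bipartition {V : Type*} [Fintype V] [DecidableEq V]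
    (T : SimpleGraph V) (k a b : ℕ) (hk : 4 ≤ k) (hcard : Fintype.card V = k)
    (hT : T.IsTree) (A B : Finset V) (hunion : A ∪ B = Finset.univ) (hdisj : Disjoint A B)
    (hA : ∀ x ∈ A, ∀ y ∈ A, ¬ T.Adj x y) (hB : ∀ x ∈ B, ∀ y ∈ B, ¬ T.Adj x y)
    (ha : A.card = a) (hb : B.card = b) (hab : a ≤ b)
    (n : ℕ) (hn : k ≤ n) :
    (a - 1) * (n - a + 1) ≤ exConn n T :=
  exConn_ge_of_bipartition_general T k a b hcard hT A B hunion hdisj hA hB ha hb hab n hn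
end

section
/- Let T be a tree on k ≥ 4 vertices that is not a path, and for a vertex v of T let m_{T,2}(v) be the sum of the numbers of vertices of the two largest connected components of T − v; set m_2(T) = min over vertices v of m_{T,2}(v). Then for every n ≥ k, ex_c(n,T) ≥ ⌊n/(k−m_2(T))⌋ · (1 + C(k−m_2(T), 2)), where C(m,2) denotes the binomial coefficient m choose 2. -/
open SimpleGraph

/-- `G` is a path graph: it has a Hamiltonian path and no other edges.
(For trees, having a Hamiltonian path is equivalent to being a path.) -/
def IsPathGraph {V : Type*} (G : SimpleGraph V) : Prop :=
  ∃ (u v : V) (p : G.Walk u v), p.IsPath ∧ ∀ w, w ∈ p.support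

/-- `m_{T,2}(v)`: the sum of the numbers of vertices of the two largest connected
components of `T - v` (realised as the largest possible total size of at most two
connected components of `T - v`). -/
noncomputable def twoLargestCompDelVert {V : Type*} (T : SimpleGraph V) (v : V) : ℕ :=
  sSup {m | ∃ C : Finset ((T.induce {u | u ≠ v}).ConnectedComponent),
    C.card ≤ 2 ∧ m = ∑ c ∈ C, c.supp.ncard}

/-- `m_2(T) = min_{v ∈ V(T)} m_{T,2}(v)`. -/
noncomputable def branchingNumber2 {V : Type*} (T : SimpleGraph V) : ℕ :=
  sInf (Set.range fun v => twoLargestCompDelVert T v)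

/-!
Let `s = k - m₂(T)` and `q = ⌊n / s⌋`. On the `n`-cycle `Fin n`, turn each of the first `q` blocks
`{c s, …, c s + s - 1}` of consecutive vertices into a clique. The resulting graph is connected and
has `q · C(s, 2)` clique edges plus the `q` cycle edges that leave the blocks.

This graph contains no copy of `T`. Suppose a copy sends `v` with `m_{T,2}(v) = m₂(T)` to `x`. Each
component of `T - v` contains a neighbour of `v`, so its image either meets one of two "doors" or is
trapped in a set of at most `s - 2` vertices. When `x` is in a block, the trap is the block minus
its two ends; the doors are those ends, except that an end equal to `x` is replaced by its neighbour
outside the block. When `x` is outside the blocks, the trap is empty and the doors are the two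
cycle neighbours of `x`. Either way `k - 1 ≤ m₂(T) + s - 2`, which is impossible.

It remains to check `2 ≤ s < n`. The upper bound holds because `m₂(T) ≥ 1`. For the lower bound,
a tree that is not a path has a vertex with three neighbours (take a longest path). These lie in
distinct components of `T - v`, so `m₂(T) ≤ k - 2`.
-/

open Finset

namespace SimpleGraph

lemma sum_ncard_supp_eq_card_filter {α : Type*} [Fintype α] (H : SimpleGraph α)
    [DecidableEq H.ConnectedComponent] (C : Finset H.ConnectedComponent) :
    ∑ c ∈ C, c.supp.ncard = #{a | H.connectedComponentMk a ∈ C} := by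
  rw [card_eq_sum_card_fiberwise (f := H.connectedComponentMk) (t := C)
    fun a ha => by simpa using ha]
  refine sum_congr rfl fun c hc => ?_
  rw [← Set.ncard_coe_finset]
  congr 1
  ext a
  simp +contextual [ConnectedComponent.mem_supp_iff, hc]

end SimpleGraph

section ComponentsDelVert

variable {V : Type*} {T : SimpleGraph V} {v : V}

lemma card_ne_eq_card_sub_one [Fintype V] [DecidableEq V] (v : V) :
    Fintype.card {u | u ≠ v} = Fintype.card V - 1 := by
  simp [Set.coe_ofPred, Fintype.card_subtype_compl]

lemma sum_ncard_supp_le_twoLargestCompDelVert [Fintype V]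
    {C : Finset (T.induce {u | u ≠ v}).ConnectedComponent} (hC : #C ≤ 2) :
    ∑ c ∈ C, c.supp.ncard ≤ twoLargestCompDelVert T v := by
  classical
  refine le_csSup ⟨Fintype.card V, ?_⟩ ⟨C, hC, rfl⟩
  rintro _ ⟨C', -, rfl⟩
  rw [sum_ncard_supp_eq_card_filter]
  exact (card_le_univ _).trans (Fintype.card_subtype_le _)

lemma twoLargestCompDelVert_le {N : ℕ}
    (h : ∀ C : Finset (T.induce {u | u ≠ v}).ConnectedComponent,
      #C ≤ 2 → ∑ c ∈ C, c.supp.ncard ≤ N) :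
    twoLargestCompDelVert T v ≤ N :=
  csSup_le ⟨0, ∅, by simp, by simp⟩ (by rintro _ ⟨C, hC, rfl⟩; exact h C hC)

lemma one_le_twoLargestCompDelVert [Fintype V] {u : V} (hu : u ≠ v) :
    1 ≤ twoLargestCompDelVert T v := by
  refine le_trans ?_ (sum_ncard_supp_le_twoLargestCompDelVert
    (C := {(T.induce {u | u ≠ v}).connectedComponentMk ⟨u, hu⟩}) (by simp))
  rw [sum_singleton, Nat.one_le_iff_ne_zero, Ne, Set.ncard_eq_zero]
  exact Set.nonempty_iff_ne_empty.1 ⟨⟨u, hu⟩, rfl⟩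

lemma exists_adj_connectedComponentMk_eq (hT : T.Preconnected)
    (c : (T.induce {u | u ≠ v}).ConnectedComponent) :
    ∃ u : {u | u ≠ v}, T.Adj u v ∧ (T.induce {u | u ≠ v}).connectedComponentMk u = c := by
  obtain ⟨w, rfl⟩ := c.exists_rep
  obtain ⟨d, -, ⟨hne, hd⟩, hout⟩ := ((hT w v).some).exists_boundary_dart
    {x | ∃ h : x ≠ v, (T.induce {u | u ≠ v}).connectedComponentMk ⟨x, h⟩ =
      (T.induce {u | u ≠ v}).connectedComponentMk w} ⟨w.2, rfl⟩ (by simp)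
  by_cases hv : d.snd = v
  · exact ⟨⟨d.fst, hne⟩, hv ▸ d.adj, hd⟩
  · have hadj : (T.induce {u | u ≠ v}).Adj ⟨d.snd, hv⟩ ⟨d.fst, hne⟩ := d.adj.symm
    exact absurd ⟨hv, (ConnectedComponent.eq.2 hadj.reachable).trans hd⟩ hout

/-- A component of `T - v` whose image misses `D` is mapped into `S`, and at most two components
meet `D`. -/
lemma card_le_twoLargestCompDelVert_add_card [Fintype V] {W : Type*} [DecidableEq W]
    {G : SimpleGraph W} (hT : T.Preconnected) (φ : V ↪ W)
    (hφ : ∀ ⦃a b⦄, T.Adj a b → G.Adj (φ a) (φ b)) (v : V) (S D : Finset W) (hD : #D ≤ 2)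
    (hSD : ∀ y ∈ insert (φ v) S, ∀ z, G.Adj y z → z ∈ insert (φ v) S ∪ D) :
    Fintype.card V ≤ twoLargestCompDelVert T v + #S + 1 := by
  classical
  set K := T.induce {u | u ≠ v}
  set C : Finset K.ConnectedComponent := image K.connectedComponentMk {u | φ u ∈ D}
  have hC : #C ≤ 2 := by
    exact card_image_le.trans
      ((card_le_card_of_injOn (fun u : {u | u ≠ v} => φ u) (fun u hu => by simpa using hu)
        fun a _ b _ h => Subtype.ext (φ.injective h)).trans hD)
  have hstep : ∀ u, K.connectedComponentMk u ∉ C → φ u ∈ insert (φ v) S ∪ D → φ u ∈ S := by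
    intro u hu h
    rcases mem_union.1 h with h | h
    · exact (mem_insert.1 h).resolve_left fun h' => u.2 (φ.injective h')
    · exact absurd (mem_image_of_mem _ (by simpa using h)) hu
  have htrap : ∀ u, K.connectedComponentMk u ∉ C → φ u ∈ S := by
    intro u hu
    obtain ⟨u₀, hadj, hu₀⟩ := exists_adj_connectedComponentMk_eq hT (K.connectedComponentMk u)
    have h₀ : φ u₀ ∈ S :=
      hstep u₀ (hu₀ ▸ hu) (hSD _ (mem_insert_self _ _) _ (hφ hadj.symm))
    by_contra hS
    obtain ⟨d, -, hd₁, hd₂⟩ := (ConnectedComponent.exact hu₀).some.exists_boundary_dart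
      {w | K.connectedComponentMk w = K.connectedComponentMk u → φ w ∈ S} (fun _ => h₀)
      fun h => hS (h rfl)
    simp only [Set.mem_ofPred_eq, Classical.not_imp] at hd₁ hd₂
    have hsame : K.connectedComponentMk d.fst = K.connectedComponentMk u :=
      (ConnectedComponent.eq.2 d.adj.reachable).trans hd₂.1
    exact hd₂.2 <| hstep _ (hd₂.1 ▸ hu) <|
      hSD _ (mem_insert_of_mem (hd₁ hsame)) _ (hφ d.adj)
  have hcount := card_filter_add_card_filter_not (s := (univ : Finset {u | u ≠ v}))
    (fun u => K.connectedComponentMk u ∈ C)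
  rw [card_univ, card_ne_eq_card_sub_one] at hcount
  have hout : #{u : {u | u ≠ v} | K.connectedComponentMk u ∉ C} ≤ #S :=
    card_le_card_of_injOn (fun u => φ u) (fun u hu => htrap u (by simpa using hu))
      (fun a _ b _ h => Subtype.ext (φ.injective h))
  have hin :
      #{u : {u | u ≠ v} | K.connectedComponentMk u ∈ C} ≤ twoLargestCompDelVert T v := by
    rw [← sum_ncard_supp_eq_card_filter]
    exact sum_ncard_supp_le_twoLargestCompDelVert hC
  omega

lemma SimpleGraph.IsAcyclic.connectedComponentMk_induce_ne_of_adj (hT : T.IsAcyclic) {a b : V}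
    (ha : T.Adj v a) (hb : T.Adj v b) (hab : a ≠ b) :
    (T.induce {u | u ≠ v}).connectedComponentMk ⟨a, ha.ne'⟩ ≠
      (T.induce {u | u ≠ v}).connectedComponentMk ⟨b, hb.ne'⟩ := by
  intro h
  obtain ⟨p⟩ := ConnectedComponent.exact h.symm
  have hp : ∀ x ∈ (p.map (Embedding.induce _).toHom).support, x ≠ v := by
    rw [Walk.support_map]
    intro x hx
    obtain ⟨y, -, rfl⟩ := List.mem_map.1 hx
    exact y.2
  have := isBridge_iff_forall_walk_mem_edges.1 (isAcyclic_iff_forall_adj_isBridge.1 hT ha)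
    (Walk.cons hb ((p.map (Embedding.induce _).toHom).copy rfl rfl))
  simp only [Walk.edges_cons, List.mem_cons, Sym2.eq_iff] at this
  rcases this with (⟨-, rfl⟩ | ⟨-, rfl⟩) | h
  · exact hab rfl
  · exact ha.ne rfl
  · exact hp _ (Walk.fst_mem_support_of_mem_edges _ h) rfl

lemma exists_adj_adj_adj_of_not_isPathGraph [Fintype V] (hT : T.Connected)
    (h : ¬ IsPathGraph T) :
    ∃ v a b c, T.Adj v a ∧ T.Adj v b ∧ T.Adj v c ∧ a ≠ b ∧ a ≠ c ∧ b ≠ c := by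
  set P := {l | ∃ (u w : V) (p : T.Walk u w), p.IsPath ∧ p.length = l}
  have hP : BddAbove P :=
    ⟨Fintype.card V, by rintro _ ⟨u, w, p, hp, rfl⟩; exact hp.length_lt.le⟩
  obtain ⟨x⟩ := hT.nonempty
  obtain ⟨u, w, p, hp, hlen⟩ := Nat.sSup_mem (⟨0, x, x, .nil, .nil, rfl⟩ : P.Nonempty) hP
  have hmax : ∀ {u' w' : V} (p' : T.Walk u' w'), p'.IsPath → p'.length ≤ p.length :=
    fun p' hp' => hlen ▸ le_csSup hP ⟨_, _, p', hp', rfl⟩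
  obtain ⟨z, hz⟩ : ∃ z, z ∉ p.support := by
    by_contra! hall
    exact h ⟨u, w, p, hp, hall⟩
  obtain ⟨d, -, hd₁, hd₂⟩ := (hT.preconnected u z).some.exists_boundary_dart
    {y | y ∈ p.support} p.start_mem_support hz
  obtain ⟨i, hy, hi⟩ := Walk.mem_support_iff_exists_getVert.1 hd₁
  rcases Nat.eq_zero_or_pos i with rfl | hi₀
  · rw [Walk.getVert_zero] at hy
    have := hmax _ ((Walk.cons_isPath_iff (hy ▸ d.adj.symm) p).2 ⟨hp, hd₂⟩)
    simp at this
  rcases hi.eq_or_lt with rfl | hi'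
  · rw [Walk.getVert_length] at hy
    have := hmax _ ((Walk.concat_isPath_iff (hy ▸ d.adj)).2 ⟨hp, hd₂⟩)
    simp at this
  have hinj := hp.getVert_injOn
  refine ⟨d.fst, p.getVert (i - 1), p.getVert (i + 1), d.snd, ?_, ?_, d.adj, ?_, ?_, ?_⟩
  · rw [← hy]
    simpa [Nat.sub_add_cancel hi₀] using (p.adj_getVert_succ (i := i - 1) (by omega)).symm
  · exact hy ▸ p.adj_getVert_succ hi'
  · intro h
    have := hinj (by simp; omega) (by simp; omega) h
    omega
  · exact fun h => hd₂ (h ▸ p.getVert_mem_support _)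
  · exact fun h => hd₂ (h ▸ p.getVert_mem_support _)

lemma twoLargestCompDelVert_le_card_sub_two [Fintype V]
    (h : 2 < Nat.card (T.induce {u | u ≠ v}).ConnectedComponent) :
    twoLargestCompDelVert T v ≤ Fintype.card V - 2 := by
  classical
  refine twoLargestCompDelVert_le fun C _ => ?_
  obtain ⟨c, hc⟩ : ∃ c, c ∉ C := by
    by_contra! hall
    have := card_le_card (fun c _ => hall c : (univ : Finset _) ⊆ C)
    rw [card_univ, ← Nat.card_eq_fintype_card] at this
    omega
  obtain ⟨u, rfl⟩ := c.exists_rep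
  rw [sum_ncard_supp_eq_card_filter, show Fintype.card V - 2 = Fintype.card V - 1 - 1 by omega,
    ← card_ne_eq_card_sub_one v, ← card_univ, ← card_erase_of_mem (mem_univ u)]
  exact card_le_card fun w hw =>
    mem_erase.2 ⟨fun h => hc (h ▸ (mem_filter.1 hw).2), mem_univ _⟩

lemma branchingNumber2_add_two_le [Fintype V] (hT : T.IsTree) (hnp : ¬ IsPathGraph T) :
    branchingNumber2 T + 2 ≤ Fintype.card V := by
  classical
  obtain ⟨v, a, b, c, ha, hb, hc, hab, hac, hbc⟩ :=
    exists_adj_adj_adj_of_not_isPathGraph hT.connected hnp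
  have h3 : 2 < Nat.card (T.induce {u | u ≠ v}).ConnectedComponent := by
    rw [Nat.card_eq_fintype_card, ← card_univ]
    refine lt_of_lt_of_le ?_ (card_le_univ
      {(T.induce {u | u ≠ v}).connectedComponentMk ⟨a, ha.ne'⟩,
        (T.induce {u | u ≠ v}).connectedComponentMk ⟨b, hb.ne'⟩,
        (T.induce {u | u ≠ v}).connectedComponentMk ⟨c, hc.ne'⟩})
    rw [card_eq_three.2 ⟨_, _, _, hT.isAcyclic.connectedComponentMk_induce_ne_of_adj ha hb hab,
      hT.isAcyclic.connectedComponentMk_induce_ne_of_adj ha hc hac,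
      hT.isAcyclic.connectedComponentMk_induce_ne_of_adj hb hc hbc, rfl⟩]
    norm_num
  have h2 : 1 < Fintype.card V := Fintype.one_lt_card_iff.2 ⟨v, a, ha.ne⟩
  have : branchingNumber2 T ≤ twoLargestCompDelVert T v := Nat.sInf_le ⟨v, rfl⟩
  have := twoLargestCompDelVert_le_card_sub_two h3
  omega

end ComponentsDelVert

section CycleGraph

variable {n : ℕ} [NeZero n]

lemma cycleGraph_adj_add_one (hn : 2 ≤ n) (x : Fin n) : (cycleGraph n).Adj x (x + 1) := by
  obtain ⟨m, rfl⟩ : ∃ m, n = m + 2 := ⟨n - 2, by omega⟩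
  simp [cycleGraph_adj]

lemma eq_add_one_or_eq_sub_one_of_cycleGraph_adj {x y : Fin n} (h : (cycleGraph n).Adj x y) :
    y = x + 1 ∨ y = x - 1 := by
  obtain ⟨m, rfl⟩ : ∃ m, n = m + 2 := by
    rcases n with _ | _ | m
    · exact x.elim0
    · exact absurd h cycleGraph_one_adj
    · exact ⟨m, rfl⟩
  have hy : y ∈ (cycleGraph (m + 2)).neighborSet x := h
  rw [cycleGraph_neighborSet] at hy
  simpa [or_comm] using hy

lemma val_add_one_eq_zero_of_val_add_one_eq (x : Fin n) (hx : x.val + 1 = n) : (x + 1).val = 0 := by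
  rw [Fin.val_add, Fin.val_one', Nat.add_mod_mod, hx, Nat.mod_self]

end CycleGraph

lemma mul_add_le_of_lt_of_mul_le {c q s n : ℕ} (hc : c < q) (hqs : q * s ≤ n) :
    c * s + s ≤ n :=
  le_trans (by rw [← Nat.succ_mul]; exact Nat.mul_le_mul_right s hc) hqs

lemma div_add_one_eq_of_mod_add_one_lt {y s : ℕ} (h : y % s + 1 < s) : (y + 1) / s = y / s :=
  Nat.div_eq_of_lt_le (by have := Nat.div_add_mod' y s; omega)
    (by have := Nat.div_add_mod' y s; rw [Nat.add_mul, one_mul]; omega)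

lemma div_sub_one_eq_of_mod_ne_zero {y s : ℕ} (hs : 0 < s) (h : y % s ≠ 0) :
    (y - 1) / s = y / s :=
  Nat.div_eq_of_lt_le (by have := Nat.div_add_mod' y s; omega)
    (by have := Nat.div_add_mod' y s; have := Nat.mod_lt y hs; rw [Nat.add_mul, one_mul]; omega)

def blockCliques (n s q : ℕ) : SimpleGraph (Fin n) where
  Adj x y := x ≠ y ∧ x.val / s = y.val / s ∧ x.val / s < q
  symm := ⟨fun _ _ h => ⟨h.1.symm, h.2.1.symm, h.2.1 ▸ h.2.2⟩⟩
  loopless := ⟨fun _ h => h.1 rfl⟩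

def blockCycleGraph (n s q : ℕ) : SimpleGraph (Fin n) := cycleGraph n ⊔ blockCliques n s q

variable {n s q : ℕ}

lemma blockCycleGraph_connected [NeZero n] : (blockCycleGraph n s q).Connected := by
  obtain ⟨m, rfl⟩ := Nat.exists_eq_succ_of_ne_zero (NeZero.ne n)
  exact cycleGraph_connected.mono le_sup_left

lemma blockCycleGraph_adj_cases [NeZero n] (hs : 0 < s) (hqs : q * s ≤ n) {y z : Fin n}
    (hy : y.val / s < q) (h : (blockCycleGraph n s q).Adj y z) :
    z.val / s = y.val / s ∨ (y.val % s = 0 ∧ z = y - 1) ∨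
      (y.val % s = s - 1 ∧ z = y + 1) := by
  have := mul_add_le_of_lt_of_mul_le hy hqs
  have := Nat.div_add_mod' y.val s
  have := Nat.mod_lt y.val hs
  rcases h with h | h
  · rcases eq_add_one_or_eq_sub_one_of_cycleGraph_adj h with rfl | rfl
    · by_cases hm : y.val % s = s - 1
      · exact Or.inr (Or.inr ⟨hm, rfl⟩)
      · left
        rw [Fin.val_add_one_of_lt' (by omega)]
        exact div_add_one_eq_of_mod_add_one_lt (by omega)
    · by_cases hm : y.val % s = 0
      · exact Or.inr (Or.inl ⟨hm, rfl⟩)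
      · left
        rw [Fin.val_sub_one_of_ne_zero (fun h0 => hm (by simp [h0]))]
        exact div_sub_one_eq_of_mod_ne_zero hs hm
  · exact Or.inl h.2.1.symm

lemma card_filter_mod_ne_le (hs : 0 < s) (c : ℕ) :
    #{y : Fin n | y.val / s = c ∧ y.val % s ≠ 0 ∧ y.val % s ≠ s - 1} ≤ s - 2 := by
  calc _ ≤ #(Ioo 0 (s - 1)) := by
        refine card_le_card_of_injOn (fun y => y.val % s) (fun y hy => ?_) fun y hy y' hy' h => ?_
        · rw [mem_coe, mem_filter] at hy
          have := Nat.mod_lt y.val hs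
          simp only [coe_Ioo, Set.mem_Ioo]
          omega
        · simp only [coe_filter, mem_univ, true_and, Set.mem_ofPred_eq] at hy hy'
          have h₁ := Nat.div_add_mod' y.val s
          have h₂ := Nat.div_add_mod' y'.val s
          rw [hy.1] at h₁
          rw [hy'.1] at h₂
          beta_reduce at h
          ext
          omega
    _ = s - 2 := by simp; omega

lemma exists_trap_blockCycleGraph_of_div_lt [NeZero n] (hs : 0 < s) (hqs : q * s ≤ n)
    {x : Fin n} (hx : x.val / s < q) :
    ∃ S D : Finset (Fin n), #S ≤ s - 2 ∧ #D ≤ 2 ∧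
      ∀ y ∈ insert x S, ∀ z, (blockCycleGraph n s q).Adj y z → z ∈ insert x S ∪ D := by
  set c := x.val / s
  have hcs : c * s + s ≤ n := mul_add_le_of_lt_of_mul_le hx hqs
  let lo : Fin n := ⟨c * s, by omega⟩
  let hi : Fin n := ⟨c * s + (s - 1), by omega⟩
  refine ⟨({y : Fin n | y.val / s = c ∧ y.val % s ≠ 0 ∧ y.val % s ≠ s - 1} : Finset _),
    {if x.val % s = 0 then x - 1 else lo, if x.val % s = s - 1 then x + 1 else hi},
    card_filter_mod_ne_le hs c, card_le_two, fun y hy z h => ?_⟩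
  have hyx : y ≠ x → y.val / s = c ∧ y.val % s ≠ 0 ∧ y.val % s ≠ s - 1 := fun hne => by
    simpa using (mem_insert.1 hy).resolve_left hne
  have hyc : y.val / s = c := by
    by_cases hne : y = x
    · rw [hne]
    · exact (hyx hne).1
  simp only [mem_union, mem_insert, mem_filter, mem_univ, true_and, mem_singleton]
  rcases blockCycleGraph_adj_cases hs hqs (hyc ▸ hx) h with hz | ⟨hy0, rfl⟩ | ⟨hy1, rfl⟩
  · have hzv := Nat.div_add_mod' z.val s
    have hxv : c * s + x.val % s = x.val := Nat.div_add_mod' x.val s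
    rw [hz, hyc] at hzv
    by_cases hz0 : z.val % s = 0
    · by_cases hx0 : x.val % s = 0
      · exact Or.inl (Or.inl (Fin.ext (by omega)))
      · exact Or.inr (Or.inl (by rw [if_neg hx0]; exact Fin.ext (by simp [lo]; omega)))
    by_cases hz1 : z.val % s = s - 1
    · by_cases hx1 : x.val % s = s - 1
      · exact Or.inl (Or.inl (Fin.ext (by omega)))
      · exact Or.inr (Or.inr (by rw [if_neg hx1]; exact Fin.ext (by simp [hi]; omega)))
    exact Or.inl (Or.inr ⟨hz.trans hyc, hz0, hz1⟩)
  · obtain rfl : y = x := by by_contra hne; exact (hyx hne).2.1 hy0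
    exact Or.inr (Or.inl (by rw [if_pos hy0]))
  · obtain rfl : y = x := by by_contra hne; exact (hyx hne).2.2 hy1
    exact Or.inr (Or.inr (by rw [if_pos hy1]))

lemma exists_trap_blockCycleGraph [NeZero n] (hs : 0 < s) (hqs : q * s ≤ n) (x : Fin n) :
    ∃ S D : Finset (Fin n), #S ≤ s - 2 ∧ #D ≤ 2 ∧
      ∀ y ∈ insert x S, ∀ z, (blockCycleGraph n s q).Adj y z → z ∈ insert x S ∪ D := by
  by_cases hx : x.val / s < q
  · exact exists_trap_blockCycleGraph_of_div_lt hs hqs hx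
  refine ⟨∅, {x - 1, x + 1}, by simp, card_le_two, fun y hy z h => ?_⟩
  obtain rfl : y = x := by simpa using hy
  rcases h with h | h
  · rcases eq_add_one_or_eq_sub_one_of_cycleGraph_adj h with rfl | rfl <;> simp
  · exact absurd h.2.2 hx

lemma mul_choose_two_le_ncard_edgeSet_blockCliques (hqs : q * s ≤ n) :
    q * s.choose 2 ≤ (blockCliques n s q).edgeSet.ncard := by
  classical
  let F : Fin q × Fin s ↪ Fin n := finProdFinEquiv.toEmbedding.trans (Fin.castLEEmb hqs)
  have hF : ∀ c p, (F (c, p)).val / s = c := fun c p => by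
    simp [F, Nat.add_mul_div_left _ _ p.pos, Nat.div_eq_of_lt p.isLt]
  let Φ : Fin q × Sym2 (Fin s) → Sym2 (Fin n) := fun ce => ce.2.map fun p => F (ce.1, p)
  calc q * s.choose 2 = #((univ ×ˢ (⊤ : SimpleGraph (Fin s)).edgeFinset).image Φ) := by
        rw [card_image_of_injOn, card_product, card_univ, Fintype.card_fin,
          card_edgeFinset_top_eq_card_choose_two, Fintype.card_fin]
        rintro ⟨c, e⟩ he ⟨c', e'⟩ he' h
        induction e using Sym2.ind
        induction e' using Sym2.ind
        simp_all [Φ]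
        tauto
    _ ≤ _ := by
        rw [← Set.ncard_coe_finset]
        refine Set.ncard_le_ncard ?_
        simp only [coe_image, Set.image_subset_iff]
        rintro ⟨c, e⟩ he
        induction e using Sym2.ind with | h i j => ?_
        simp only [coe_product, Set.mem_prod, mem_coe, mem_edgeFinset, mem_edgeSet, top_adj] at he
        show (blockCliques n s q).Adj (F (c, i)) (F (c, j))
        exact ⟨fun h => he.2 (by simpa using F.injective h), by rw [hF, hF],
          by rw [hF]; exact c.isLt⟩

lemma le_ncard_edgeSet_cycleGraph_diff_blockCliques [NeZero n] (hs : 2 ≤ s) (hsn : s < n)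
    (hqs : q * s ≤ n) :
    q ≤ ((cycleGraph n).edgeSet \ (blockCliques n s q).edgeSet).ncard := by
  have hcs : ∀ c : Fin q, c * s + s ≤ n := fun c => mul_add_le_of_lt_of_mul_le c.isLt hqs
  let hi : Fin q → Fin n := fun c => ⟨c * s + (s - 1), by have := hcs c; omega⟩
  have hhi : ∀ c, (hi c).val / s = c := fun c =>
    Nat.div_eq_of_lt_le (by simp [hi]) (by simp only [hi]; rw [Nat.succ_mul]; omega)
  have hnext : ∀ c, (hi c + 1).val / s ≠ c := by
    intro c
    have hval : (hi c).val + 1 = c * s + s := by simp only [hi]; omega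
    rcases (hcs c).lt_or_eq with hlt | heq
    · rw [Fin.val_add_one_of_lt' (by omega), hval, ← add_one_mul,
        Nat.mul_div_cancel _ (by omega)]
      omega
    · rw [val_add_one_eq_zero_of_val_add_one_eq _ (by omega), Nat.zero_div]
      intro hc
      rw [← hc, zero_mul, zero_add] at heq
      omega
  calc q = (Set.univ : Set (Fin q)).ncard := by simp
    _ ≤ _ := by
      refine Set.ncard_le_ncard_of_injOn (fun c => s(hi c, hi c + 1)) (fun c _ => ⟨?_, ?_⟩) ?_
      · exact cycleGraph_adj_add_one (by omega) _
      · exact fun h => hnext c (h.2.1.symm.trans (hhi c))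
      · intro c _ d _ h
        rcases Sym2.eq_iff.1 h with ⟨h, -⟩ | ⟨h₁, h₂⟩
        · exact Fin.ext (by rw [← hhi c, h, hhi d])
        · have h2 : (1 + 1 : Fin n) = 0 :=
            add_left_cancel (a := hi c) (by rw [add_zero, ← add_assoc, h₂, h₁])
          have := congrArg Fin.val h2
          rw [Fin.val_add, Fin.val_one', Nat.mod_eq_of_lt (by omega : 1 < n), Fin.val_zero,
            Nat.mod_eq_of_lt (by omega : 1 + 1 < n)] at this
          omega

lemma mul_one_add_choose_two_le_ncard_edgeSet_blockCycleGraph [NeZero n] (hs : 2 ≤ s)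
    (hsn : s < n) (hqs : q * s ≤ n) :
    q * (1 + s.choose 2) ≤ (blockCycleGraph n s q).edgeSet.ncard := by
  rw [blockCycleGraph, edgeSet_sup, Set.union_comm, ← Set.union_sdiff_self,
    Set.ncard_union_eq Set.disjoint_sdiff_right]
  have := mul_choose_two_le_ncard_edgeSet_blockCliques (q := q) hqs
  have := le_ncard_edgeSet_cycleGraph_diff_blockCliques hs hsn hqs
  rw [mul_add, mul_one]
  omega

lemma card_le_twoLargestCompDelVert_add_of_containsCopy {V : Type*} [Fintype V]
    {T : SimpleGraph V} [NeZero n] (hT : T.Preconnected) (hs : 0 < s) (hqs : q * s ≤ n)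
    (h : ContainsCopy T (blockCycleGraph n s q)) (v : V) :
    Fintype.card V ≤ twoLargestCompDelVert T v + (s - 2) + 1 := by
  obtain ⟨φ, hφ⟩ := h
  obtain ⟨S, D, hS, hD, hSD⟩ := exists_trap_blockCycleGraph hs hqs (φ v)
  have := card_le_twoLargestCompDelVert_add_card hT φ hφ v S D hD hSD
  omega

theorem exConn_ge_of_branchingNumber2_general {V : Type*} [Fintype V] (T : SimpleGraph V) (k : ℕ)
    (hcard : Fintype.card V = k) (hT : T.IsTree) (hnp : ¬ IsPathGraph T)
    (n : ℕ) (hn : k ≤ n) :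
    n / (k - branchingNumber2 T) * (1 + (k - branchingNumber2 T).choose 2)
      ≤ exConn n T := by
  have hm := branchingNumber2_add_two_le hT hnp
  have : Nonempty V := Fintype.card_pos_iff.1 (by omega)
  obtain ⟨v₀, hv₀⟩ : branchingNumber2 T ∈ Set.range (twoLargestCompDelVert T) :=
    Nat.sInf_mem (Set.range_nonempty _)
  obtain ⟨u, hu⟩ := Fintype.exists_ne_of_one_lt_card (by omega) v₀
  have hm₀ : 1 ≤ branchingNumber2 T := hv₀ ▸ one_le_twoLargestCompDelVert hu
  set s := k - branchingNumber2 T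
  have : NeZero n := ⟨by omega⟩
  have hqs : n / s * s ≤ n := Nat.div_mul_le_self n s
  refine (mul_one_add_choose_two_le_ncard_edgeSet_blockCycleGraph (by omega) (by omega) hqs).trans
    (ncard_edgeSet_le_exConn blockCycleGraph_connected fun hcopy => ?_)
  have := card_le_twoLargestCompDelVert_add_of_containsCopy hT.connected.preconnected
    (by omega) hqs hcopy v₀
  omega

/-- Proposition (two branches construction): if `T` is a tree on `k ≥ 4` vertices which
is not a path, then for `n ≥ k`, `ex_c(n,T) ≥ ⌊n/(k-m_2(T))⌋ (1 + C(k-m_2(T), 2))`. -/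
theorem exConn_ge_of_branchingNumber2 {V : Type*} [Fintype V] (T : SimpleGraph V) (k : ℕ)
    (hk : 4 ≤ k) (hcard : Fintype.card V = k) (hT : T.IsTree) (hnp : ¬ IsPathGraph T)
    (n : ℕ) (hn : k ≤ n) :
    n / (k - branchingNumber2 T) * (1 + (k - branchingNumber2 T).choose 2)
      ≤ exConn n T :=
  exConn_ge_of_branchingNumber2_general T k hcard hT hnp n hn
end

section
/- Let k and a be integers with 2 ≤ a ≤ k/3, and let B(k,a) be the broom on k vertices, i.e., the spider S_{a−1,1,…,1} with one leg of a−1 edges and k−a legs of one edge each. Then there exists n_0 such that for all n ≥ n_0, ex_c(n, B(k,a)) = ⌊(k−a)n/2⌋. -/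
open SimpleGraph

/-- The broom `B(k,a)`: the spider `S_{a-1,1,…,1}` on `k` vertices, with center `0`,
one leg `0 - 1 - ⋯ - (a-1)` of `a-1` edges, and `k-a` legs of one edge each
(the pendant vertices `a, …, k-1` adjacent to the center `0`). -/
def broom (k a : ℕ) : SimpleGraph (Fin k) :=
  SimpleGraph.fromRel (fun i j =>
    ((i : ℕ) + 1 = (j : ℕ) ∧ (j : ℕ) < a) ∨ ((i : ℕ) = 0 ∧ a ≤ (j : ℕ)))

/-!
The lower bound is the `⌊d/2⌋`-th power of the `n`-cycle, `d = k - a`, together with, for odd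
`d`, a matching of `⌊n/2⌋` chords of length `⌊n/2⌋`: it is connected, has `⌊dn/2⌋` edges, and its
maximum degree `d` is smaller than the degree `d + 1` of the centre of the broom.

For the upper bound let `G` be connected and `B(k,a)`-free with `2e(G) > dn`. Then `G` has a
nonempty core `W` in which every vertex has at least `a - 1` neighbours in `W`, so from every vertex
grows a path on `a` vertices (walk to `W`, then extend greedily inside `W`). At a vertex of degree
at least `k - 1` such a path leaves `k - a` neighbours outside it, which completes a broom; hence
`Δ(G) ≤ k - 2`. Some vertex `u` has degree at least `d + 1`, and a geodesic from `u` meets `N(u)`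
only in its second vertex, so a vertex at distance `a - 1` from `u` would again give a broom. Thus
every vertex lies within distance `a - 2` of `u`, and `n ≤ (k - 1)^(a - 2)`.
-/

open Finset

theorem ContainsCopy.isContained {α β : Type*} {F : SimpleGraph α} {G : SimpleGraph β}
    (h : ContainsCopy F G) : F ⊑ G :=
  let ⟨f, hf⟩ := h; ⟨⟨⟨f, @hf⟩, f.injective⟩⟩

instance (k a : ℕ) : DecidableRel (broom k a).Adj :=
  fun _ _ => inferInstanceAs (Decidable (_ ∧ _))

theorem degree_broom_zero {k a : ℕ} (ha : 2 ≤ a) (hak : a < k) :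
    (broom k a).degree ⟨0, by omega⟩ = k - a + 1 := by
  have : (broom k a).neighborFinset ⟨0, by omega⟩ =
      (insert 1 (Ico a k)).attachFin (fun j hj => by simp at hj; omega) := by
    ext j
    rw [mem_neighborFinset, broom, fromRel_adj]
    simp only [mem_attachFin, mem_insert, mem_Ico, ne_eq, Fin.ext_iff, true_and]
    omega
  rw [← card_neighborFinset_eq_degree, this, card_attachFin, card_insert_of_notMem (by simp; omega),
    Nat.card_Ico]

theorem not_containsCopy_broom_of_degree_le {V : Type*} [Fintype V] {G : SimpleGraph V}
    [DecidableRel G.Adj] {k a : ℕ} (ha : 2 ≤ a) (hak : a < k) (hdeg : ∀ v, G.degree v ≤ k - a) :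
    ¬ ContainsCopy (broom k a) G := fun h => by
  obtain ⟨c⟩ := h.isContained
  have := c.degree_le ⟨0, by omega⟩
  rw [degree_broom_zero ha hak] at this
  have := hdeg (c ⟨0, by omega⟩)
  omega

theorem containsCopy_broom_of_isPath {V : Type*} [Fintype V] [DecidableEq V] {G : SimpleGraph V}
    [DecidableRel G.Adj] {k a : ℕ} {v w : V} {p : G.Walk v w} (hp : p.IsPath)
    (hlen : p.length + 1 = a)
    (hleaves : k - a + #(G.neighborFinset v ∩ p.support.toFinset) ≤ G.degree v) :
    ContainsCopy (broom k a) G := by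
  have hsplit := card_sdiff_add_card_inter (G.neighborFinset v) p.support.toFinset
  rw [card_neighborFinset_eq_degree] at hsplit
  obtain ⟨T, hT, hTcard⟩ :=
    exists_subset_card_eq (n := k - a) (s := G.neighborFinset v \ p.support.toFinset) (by omega)
  let leaf : Fin (k - a) ↪ V :=
    ⟨fun i => T.equivFin.symm (Fin.cast hTcard.symm i), fun i j h => by simpa using h⟩
  have leaf_mem (i) : leaf i ∈ T := (T.equivFin.symm _).2
  have leaf_adj (i) : G.Adj v (leaf i) :=
    (mem_neighborFinset ..).mp (mem_sdiff.mp (hT (leaf_mem i))).1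
  have leaf_notMem (i) (j : ℕ) : leaf i ≠ p.getVert j := fun h =>
    (mem_sdiff.mp (hT (leaf_mem i))).2 (by simp [h])
  let f : Fin k → V := fun i =>
    if h : (i : ℕ) < a then p.getVert i else leaf ⟨i - a, by omega⟩
  have f_injective : Function.Injective f := by
    intro i j hij
    simp only [f] at hij
    split_ifs at hij with hi hj hj
    · exact Fin.ext (hp.getVert_injOn (by simp; omega) (by simp; omega) hij)
    · exact absurd hij.symm (leaf_notMem _ _)
    · exact absurd hij (leaf_notMem _ _)
    · have := congrArg Fin.val (leaf.injective hij)
      simp only at this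
      exact Fin.ext (by omega)
  have f_adj {i j : Fin k} (h : ((i : ℕ) + 1 = j ∧ (j : ℕ) < a) ∨ ((i : ℕ) = 0 ∧ a ≤ j)) :
      G.Adj (f i) (f j) := by
    rcases h with ⟨hij, hja⟩ | ⟨hi, hja⟩
    · simp only [f, dif_pos hja, dif_pos (show (i : ℕ) < a by omega), ← hij]
      exact p.adj_getVert_succ (by omega)
    · simp only [f, dif_pos (show (i : ℕ) < a by omega), dif_neg (show ¬ (j : ℕ) < a by omega),
        hi, Walk.getVert_zero]
      exact leaf_adj _
  refine ⟨⟨f, f_injective⟩, fun i j hij => ?_⟩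
  rcases (fromRel_adj _ _ _).mp hij with ⟨-, h | h⟩
  · exact f_adj h
  · exact (f_adj h).symm

namespace SimpleGraph

variable {V : Type*} {G : SimpleGraph V}

theorem Walk.dist_getVert_of_length_eq_dist (hconn : G.Connected) {u v : V} {p : G.Walk u v}
    (hp : p.length = G.dist u v) {i : ℕ} (hi : i ≤ p.length) : G.dist u (p.getVert i) = i := by
  have hfst : G.dist u (p.getVert i) ≤ i := by simpa [hi] using dist_le (p.take i)
  have hsnd : G.dist (p.getVert i) v ≤ p.length - i := by
    simpa using dist_le (p.drop i)
  have := hconn.dist_triangle (u := u) (v := p.getVert i) (w := v)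
  omega

variable [Fintype V] [DecidableEq V] [DecidableRel G.Adj]

theorem Walk.IsPath.card_neighborFinset_inter_support_le {v w : V} {p : G.Walk v w}
    (hp : p.IsPath) {u : V} (hu : u ∈ p.support) :
    #(G.neighborFinset u ∩ p.support.toFinset) ≤ p.length := by
  calc #(G.neighborFinset u ∩ p.support.toFinset)
      ≤ #(p.support.toFinset.erase u) :=
        card_le_card fun y hy => by
          obtain ⟨hy, hyp⟩ := mem_inter.mp hy
          exact mem_erase.mpr ⟨(G.ne_of_adj ((mem_neighborFinset ..).mp hy)).symm, hyp⟩
    _ = p.length := by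
        rw [card_erase_of_mem (List.mem_toFinset.mpr hu),
          List.toFinset_card_of_nodup hp.support_nodup, Walk.length_support, Nat.add_sub_cancel]

theorem exists_isPath_length_eq_of_le_card_neighborFinset_inter (hconn : G.Connected)
    {W : Finset V} (hW : W.Nonempty) {L : ℕ} (hdeg : ∀ u ∈ W, L ≤ #(G.neighborFinset u ∩ W))
    (v : V) : ∃ (x : V) (q : G.Walk v x), q.IsPath ∧ q.length = L := by
  have extend : ∀ j, ∀ w ∈ W, ∀ p : G.Walk v w, p.IsPath → p.length + j = L →
      ∃ (x : V) (q : G.Walk v x), q.IsPath ∧ q.length = L := by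
    intro j
    induction j with
    | zero => exact fun w _ p hp hlen => ⟨w, p, hp, hlen⟩
    | succ j ih =>
      intro w hw p hp hlen
      have hfresh : ¬ G.neighborFinset w ∩ W ⊆ p.support.toFinset := fun hsub => by
        have := (card_le_card (subset_inter inter_subset_left hsub)).trans
          (hp.card_neighborFinset_inter_support_le p.end_mem_support)
        have := hdeg w hw
        omega
      obtain ⟨y, hy, hyp⟩ := not_subset.mp hfresh
      rw [mem_inter, mem_neighborFinset] at hy
      rw [List.mem_toFinset] at hyp
      exact ih y hy.2 (p.concat hy.1) (hp.concat hyp hy.1)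
        (by rw [Walk.length_concat]; omega)
  obtain ⟨w, hw⟩ := hW
  obtain ⟨p, hp⟩ := hconn.preconnected.exists_isPath v w
  rcases le_total L p.length with hL | hL
  · exact ⟨_, p.take L, hp.take L, by simpa using hL⟩
  · exact extend (L - p.length) w hw p hp (by omega)

theorem Connected.exists_isPath_card_neighborFinset_inter_support_le_one (hconn : G.Connected)
    {v z : V} {L : ℕ} (hL : L ≤ G.dist v z) : ∃ (x : V) (q : G.Walk v x),
      q.IsPath ∧ q.length = L ∧ #(G.neighborFinset v ∩ q.support.toFinset) ≤ 1 := by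
  obtain ⟨p, hp⟩ := hconn.exists_walk_length_eq_dist v z
  refine ⟨_, p.take L, (p.isPath_of_length_eq_dist hp).take L, by simp; omega, ?_⟩
  refine card_le_one.mpr fun y hy y' hy' => ?_
  have key {y} (hy : y ∈ G.neighborFinset v ∩ (p.take L).support.toFinset) : y = p.getVert 1 := by
    rw [mem_inter, mem_neighborFinset, List.mem_toFinset, Walk.mem_support_iff_exists_getVert] at hy
    obtain ⟨hadj, i, rfl, hi⟩ := hy
    rw [Walk.take_getVert] at hadj ⊢
    have := p.dist_getVert_of_length_eq_dist hconn hp (i := min L i) (by simp at hi; omega)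
    rw [dist_eq_one_iff_adj.mpr hadj] at this
    rw [← this]
  rw [key hy, key hy']

theorem Connected.card_filter_dist_le_le_pow (hconn : G.Connected) {D : ℕ}
    (hdeg : ∀ u, G.degree u ≤ D) (v : V) (r : ℕ) :
    #{z | G.dist v z ≤ r} ≤ (D + 1) ^ r := by
  induction r with
  | zero =>
    refine card_le_one.mpr fun z hz z' hz' => ?_
    simp only [mem_filter, mem_univ, true_and, Nat.le_zero, hconn.dist_eq_zero_iff] at hz hz'
    rw [← hz, ← hz']
  | succ r ih =>
    have hsub : ({z | G.dist v z ≤ r + 1} : Finset V) ⊆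
        ({z | G.dist v z ≤ r} : Finset V) ∪
          ({z | G.dist v z ≤ r} : Finset V).biUnion (G.neighborFinset ·) := by
      intro z hz
      rw [mem_filter_univ] at hz
      rw [mem_union, mem_biUnion, mem_filter_univ]
      rcases Nat.lt_or_ge (G.dist v z) (r + 1) with h | h
      · exact Or.inl (by omega)
      obtain ⟨p, hp⟩ := hconn.exists_walk_length_eq_dist z v
      rw [dist_comm] at hp
      cases p with
      | nil => simp at h
      | cons hadj q =>
        refine Or.inr ⟨_, ?_, (mem_neighborFinset ..).mpr hadj.symm⟩
        rw [mem_filter_univ, dist_comm]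
        have := dist_le q
        rw [Walk.length_cons] at hp
        omega
    set B := ({z | G.dist v z ≤ r} : Finset V)
    calc #{z | G.dist v z ≤ r + 1}
        ≤ #B + ∑ y ∈ B, #(G.neighborFinset y) :=
          (card_le_card hsub).trans ((card_union_le _ _).trans (by gcongr; exact card_biUnion_le))
      _ ≤ #B + ∑ y ∈ B, D := by gcongr with y; rw [card_neighborFinset_eq_degree]; exact hdeg y
      _ = #B * (D + 1) := by rw [sum_const, smul_eq_mul]; ring
      _ ≤ (D + 1) ^ (r + 1) := by rw [pow_succ]; gcongr

-- Deleting a vertex with at most `c` neighbours in `A` preserves `c * #A < #G.edgeFinset`.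
theorem exists_nonempty_lt_card_neighborFinset_inter
    {A : Finset V} (hA : G.support ⊆ A) {c : ℕ} (hedges : c * #A < #G.edgeFinset) :
    ∃ W : Finset V, W.Nonempty ∧ ∀ u ∈ W, c < #(G.neighborFinset u ∩ W) := by
  induction A using Finset.strongInduction generalizing G with
  | H A ih =>
  by_cases hall : ∀ u ∈ A, c < #(G.neighborFinset u ∩ A)
  · refine ⟨A, ?_, hall⟩
    obtain ⟨e, he⟩ := card_pos.mp (Nat.zero_lt_of_lt hedges)
    induction e using Sym2.ind with
    | h u w => exact ⟨u, hA (G.mem_support.mpr ⟨w, mem_edgeFinset.mp he⟩)⟩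
  push Not at hall
  obtain ⟨u, huA, hu⟩ := hall
  have hdeg : G.degree u ≤ c := by
    rw [← card_neighborFinset_eq_degree]
    exact le_trans (card_le_card fun w hw =>
      mem_inter.mpr ⟨hw, hA (G.mem_support.mpr ⟨u, ((mem_neighborFinset ..).mp hw).symm⟩)⟩) hu
  have hcard : c * #(A.erase u) + c = c * #A := by
    rw [card_erase_of_mem huA, ← Nat.mul_succ, Nat.succ_eq_add_one,
      Nat.sub_add_cancel (card_pos.mpr ⟨u, huA⟩)]
  obtain ⟨W, hW, hWdeg⟩ := ih (A.erase u) (erase_ssubset huA) (G := G.deleteIncidenceSet u)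
    (fun w hw => by
      have := G.support_deleteIncidenceSet_subset u hw
      exact mem_erase.mpr ⟨by simpa using this.2, hA this.1⟩)
    (by rw [card_edgeFinset_deleteIncidenceSet]; omega)
  refine ⟨W, hW, fun w hw => (hWdeg w hw).trans_le (card_le_card (inter_subset_inter_right ?_))⟩
  intro y hy
  rw [mem_neighborFinset] at hy ⊢
  exact G.deleteIncidenceSet_le u hy

end SimpleGraph

theorem two_mul_card_edgeFinset_le_of_not_containsCopy_broom {V : Type*} [Fintype V]
    [DecidableEq V] {G : SimpleGraph V} [DecidableRel G.Adj] {k a : ℕ} (ha : 2 ≤ a)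
    (hak : 3 * a ≤ k) (hconn : G.Connected) (hfree : ¬ ContainsCopy (broom k a) G)
    (hV : (k - 1) ^ (a - 2) < Fintype.card V) :
    2 * #G.edgeFinset ≤ (k - a) * Fintype.card V := by
  by_contra! hdense
  obtain ⟨W, hW, hWdeg⟩ := exists_nonempty_lt_card_neighborFinset_inter (G := G) (A := univ)
      (c := a - 2) (by simp) (by
    have := Nat.mul_le_mul_right (Fintype.card V) (show 2 * (a - 2) ≤ k - a by omega)
    rw [mul_assoc] at this
    rw [card_univ]
    omega)
  have hmaxdeg (v : V) : G.degree v ≤ k - 2 := by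
    by_contra! hv
    obtain ⟨x, p, hp, hlen⟩ := exists_isPath_length_eq_of_le_card_neighborFinset_inter hconn hW
      (L := a - 1) (fun u hu => by have := hWdeg u hu; omega) v
    have := hp.card_neighborFinset_inter_support_le p.start_mem_support
    exact hfree (containsCopy_broom_of_isPath hp (by omega) (by omega))
  obtain ⟨u, hu⟩ : ∃ u, k - a < G.degree u := by
    by_contra! hsparse
    have := sum_le_sum fun v (_ : v ∈ univ) => hsparse v
    rw [sum_degrees_eq_twice_card_edges, sum_const, card_univ, smul_eq_mul] at this
    have := Nat.mul_comm (Fintype.card V) (k - a)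
    omega
  have hclose (z : V) : G.dist u z ≤ a - 2 := by
    by_contra! hz
    obtain ⟨x, q, hq, hlen, hnbr⟩ :=
      hconn.exists_isPath_card_neighborFinset_inter_support_le_one (v := u) (z := z) (L := a - 1) (by omega)
    exact hfree (containsCopy_broom_of_isPath hq (by omega) (by omega))
  have hball := hconn.card_filter_dist_le_le_pow hmaxdeg u (a - 2)
  rw [filter_true_of_mem fun z _ => hclose z, card_univ, show k - 2 + 1 = k - 1 by omega] at hball
  omega

namespace SimpleGraph

theorem degree_circulantGraph {α : Type*} [AddGroup α] [Fintype α] [DecidableEq α]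
    {s : Finset α} (hs : ∀ x ∈ s, -x ∉ s) (v : α) :
    (circulantGraph (s : Set α)).degree v = 2 * #s := by
  have hs0 : (0 : α) ∉ s := fun h => hs 0 h (by simpa using h)
  have hnbr : (circulantGraph (s : Set α)).neighborFinset v =
      s.image (· + v) ∪ s.image (fun x => -x + v) := by
    ext w
    rw [mem_neighborFinset, circulantGraph_adj, mem_union, mem_image, mem_image]
    constructor
    · rintro ⟨-, h | h⟩
      · exact Or.inr ⟨v - w, h, by simp [sub_eq_add_neg, add_assoc]⟩
      · exact Or.inl ⟨w - v, h, by simp⟩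
    · rintro (⟨x, hx, rfl⟩ | ⟨x, hx, rfl⟩)
      · refine ⟨fun h => hs0 ?_, Or.inr (by simpa)⟩
        obtain rfl : x = 0 := by simpa using h.symm
        exact hx
      · refine ⟨fun h => hs0 ?_, Or.inl (by simpa [sub_eq_add_neg, add_assoc])⟩
        obtain rfl : x = 0 := by simpa using h.symm
        exact hx
  rw [← card_neighborFinset_eq_degree, hnbr, card_union_of_disjoint, card_image_of_injective,
    card_image_of_injective, two_mul]
  · exact fun x y h => neg_injective (add_right_cancel h)
  · exact add_left_injective v
  · refine Finset.disjoint_left.mpr fun w hw hw' => ?_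
    obtain ⟨x, hx, rfl⟩ := mem_image.mp hw
    obtain ⟨y, hy, hxy⟩ := mem_image.mp hw'
    obtain rfl : -y = x := add_right_cancel hxy
    exact hs y hy hx

-- A perfect matching for even `n`; for odd `n` only the vertex `n - 1` is left unmatched.
def halfShiftMatching (n : ℕ) : SimpleGraph (Fin n) :=
  fromRel fun x y => x.val < n / 2 ∧ y.val = x.val + n / 2

def cycleJumps (n m : ℕ) [NeZero n] : Finset (Fin n) := (Icc 1 m).image (Fin.ofNat n)

def cyclePower (n m : ℕ) [NeZero n] : SimpleGraph (Fin n) :=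
  circulantGraph (cycleJumps n m : Set (Fin n))

variable {n : ℕ}

theorem halfShiftMatching_adj {x y : Fin n} : (halfShiftMatching n).Adj x y ↔
    (x.val < n / 2 ∧ y.val = x.val + n / 2) ∨ (y.val < n / 2 ∧ x.val = y.val + n / 2) := by
  rw [halfShiftMatching, fromRel_adj, and_iff_right_iff_imp]
  rintro h rfl
  omega

theorem degree_halfShiftMatching_le_one [DecidableRel (halfShiftMatching n).Adj] (x : Fin n) :
    (halfShiftMatching n).degree x ≤ 1 := by
  rw [← card_neighborFinset_eq_degree, card_le_one]
  intro y hy y' hy'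
  rw [mem_neighborFinset, halfShiftMatching_adj] at hy hy'
  exact Fin.ext (by omega)

theorem exists_halfShiftMatching_adj {x : Fin n} (hx : x.val < 2 * (n / 2)) :
    ∃ y, (halfShiftMatching n).Adj x y := by
  rcases Nat.lt_or_ge x.val (n / 2) with h | h
  · exact ⟨⟨x.val + n / 2, by omega⟩, halfShiftMatching_adj.mpr (Or.inl ⟨h, rfl⟩)⟩
  · exact ⟨⟨x.val - n / 2, by omega⟩,
      halfShiftMatching_adj.mpr (Or.inr ⟨by simp; omega, by simp; omega⟩)⟩

section CyclePower

variable [NeZero n] {m : ℕ}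

theorem val_mem_Icc_of_mem_cycleJumps (hm : m < n) {x : Fin n} (hx : x ∈ cycleJumps n m) :
    x.val ∈ Set.Icc 1 m := by
  obtain ⟨c, hc, rfl⟩ := mem_image.mp hx
  rw [Fin.val_ofNat, Nat.mod_eq_of_lt (by simp at hc; omega)]
  exact mem_Icc.mp hc

theorem degree_cyclePower (hm : 2 * m < n) [DecidableRel (cyclePower n m).Adj] (v : Fin n) :
    (cyclePower n m).degree v = 2 * m := by
  have hcard : #(cycleJumps n m) = m := by
    rw [cycleJumps, card_image_of_injOn, Nat.card_Icc, Nat.add_sub_cancel]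
    intro c hc c' hc' h
    simp only [coe_Icc, Set.mem_Icc] at hc hc'
    simpa [Nat.mod_eq_of_lt (show c < n by omega), Nat.mod_eq_of_lt (show c' < n by omega)]
      using congrArg Fin.val h
  unfold cyclePower
  convert degree_circulantGraph (fun x hx hnx => ?_) v
  · exact hcard.symm
  obtain ⟨h1, h1'⟩ := val_mem_Icc_of_mem_cycleJumps (by omega) hx
  obtain ⟨h2, h2'⟩ := val_mem_Icc_of_mem_cycleJumps (by omega) hnx
  rw [Fin.val_neg', Nat.mod_eq_of_lt (by omega)] at h2 h2'
  omega

theorem cyclePower_connected (hm : 1 ≤ m) (hmn : m < n) : (cyclePower n m).Connected := by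
  obtain ⟨n, rfl⟩ := Nat.exists_eq_add_one_of_ne_zero (NeZero.ne n)
  refine (cycleGraph_connected (n := n)).mono fun u v h => ?_
  rw [cycleGraph_eq_circulantGraph, circulantGraph_adj] at h
  rw [cyclePower, circulantGraph_adj]
  have h1 : (1 : Fin (n + 1)) ∈ cycleJumps (n + 1) m :=
    mem_image.mpr ⟨1, mem_Icc.mpr ⟨le_rfl, hm⟩, Fin.ext (by simp)⟩
  simp only [Set.mem_singleton_iff] at h
  rcases h with ⟨hne, h | h⟩ <;> rw [h] at * <;> simp_all

theorem not_cyclePower_adj_of_halfShiftMatching_adj (hm : m < n / 2) {x y : Fin n}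
    (h : (halfShiftMatching n).Adj x y) : ¬ (cyclePower n m).Adj x y := by
  have key {x y : Fin n} (h : x.val < n / 2 ∧ y.val = x.val + n / 2) :
      x - y ∉ cycleJumps n m ∧ y - x ∉ cycleJumps n m := by
    constructor <;> intro hmem <;>
      obtain ⟨h1, h2⟩ := val_mem_Icc_of_mem_cycleJumps (by omega) hmem
    · rw [Fin.coe_sub_iff_lt.mpr (by rw [Fin.lt_def]; omega)] at h1 h2; omega
    · rw [Fin.sub_val_of_le (by rw [Fin.le_def]; omega)] at h1 h2; omega
  rw [cyclePower, circulantGraph_adj]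
  rintro ⟨-, hxy⟩
  rcases halfShiftMatching_adj.mp h with h | h
  · have := key h; tauto
  · have := key h; tauto

end CyclePower

theorem exists_connected_degree_le_le_card_edgeFinset {d n : ℕ} (hd : 2 ≤ d) (hn : d + 2 ≤ n) :
    ∃ (G : SimpleGraph (Fin n)) (_ : DecidableRel G.Adj),
      G.Connected ∧ (∀ v, G.degree v ≤ d) ∧ d * n / 2 ≤ #G.edgeFinset := by
  have : NeZero n := ⟨by omega⟩
  obtain ⟨m, rfl | rfl⟩ := Nat.even_or_odd' d
  · classical
    refine ⟨cyclePower n m, inferInstance, cyclePower_connected (by omega) (by omega),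
      fun v => (degree_cyclePower (by omega) v).le, ?_⟩
    have := sum_degrees_eq_twice_card_edges (cyclePower n m)
    rw [sum_congr rfl fun v _ => degree_cyclePower (by omega) v, sum_const, card_univ,
      Fintype.card_fin, smul_eq_mul] at this
    rw [mul_comm, this, Nat.mul_div_cancel_left _ two_pos]
  · classical
    set G := cyclePower n m ⊔ halfShiftMatching n
    have hdeg_le (v) : G.degree v ≤ 2 * m + 1 := by
      rw [← card_neighborFinset_eq_degree, neighborFinset_sup]
      refine (card_union_le _ _).trans ?_
      rw [card_neighborFinset_eq_degree, card_neighborFinset_eq_degree,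
        degree_cyclePower (by omega)]
      have := degree_halfShiftMatching_le_one v
      omega
    have hdeg_ge (v : Fin n) : 2 * m + (if v.val < 2 * (n / 2) then 1 else 0) ≤ G.degree v := by
      rw [← degree_cyclePower (n := n) (m := m) (by omega) v]
      split_ifs with hv
      · obtain ⟨y, hy⟩ := exists_halfShiftMatching_adj hv
        have hyC : y ∉ (cyclePower n m).neighborFinset v := by
          rw [mem_neighborFinset]
          exact not_cyclePower_adj_of_halfShiftMatching_adj (by omega) hy
        rw [← card_neighborFinset_eq_degree, ← card_neighborFinset_eq_degree,
          ← card_insert_of_notMem hyC]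
        refine card_le_card (insert_subset ?_ fun w hw => ?_) <;>
          simp_all [G, mem_neighborFinset]
      · rw [add_zero]
        exact degree_le_of_le le_sup_left
    refine ⟨G, inferInstance, (cyclePower_connected (by omega) (by omega)).mono le_sup_left,
      hdeg_le, ?_⟩
    have hsum := sum_le_sum fun v (_ : v ∈ univ) => hdeg_ge v
    rw [sum_degrees_eq_twice_card_edges, sum_add_distrib, sum_const, sum_boole, Nat.cast_id,
      Fin.card_filter_val_lt, card_univ, Fintype.card_fin, smul_eq_mul] at hsum
    have : (2 * m + 1) * n = 2 * (n * m) + n := by ring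
    have : n * (2 * m) = 2 * (n * m) := by ring
    have : min n (2 * (n / 2)) = 2 * (n / 2) := by omega
    omega

end SimpleGraph

/-- Theorem (broom exact value): for `2 ≤ a ≤ k/3`, `ex_c(n, B(k,a)) = ⌊(k-a)n/2⌋` for
all large enough `n`. -/
theorem exConn_broom_eq (k a : ℕ) (ha : 2 ≤ a) (hak : 3 * a ≤ k) :
    ∃ n₀ : ℕ, ∀ n ≥ n₀, exConn n (broom k a) = (k - a) * n / 2 := by
  refine ⟨k ^ a, fun n hn => ?_⟩
  have hpow : (k - 1) ^ (a - 2) < n := calc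
    (k - 1) ^ (a - 2) ≤ k ^ (a - 2) := Nat.pow_le_pow_left (by omega) _
    _ < k ^ a := Nat.pow_lt_pow_right (by omega) (by omega)
    _ ≤ n := hn
  have hkn : k ≤ n := (Nat.le_self_pow (by omega) k).trans hn
  classical
  have hupper (G : SimpleGraph (Fin n)) (hconn : G.Connected)
      (hfree : ¬ ContainsCopy (broom k a) G) : G.edgeSet.ncard ≤ (k - a) * n / 2 := by
    have := two_mul_card_edgeFinset_le_of_not_containsCopy_broom ha hak hconn hfree
      (by simpa using hpow)
    rw [Fintype.card_fin] at this
    rw [← coe_edgeFinset, Set.ncard_coe_finset]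
    omega
  obtain ⟨G, _, hconn, hdeg, hedges⟩ :=
    exists_connected_degree_le_le_card_edgeFinset (d := k - a) (n := n) (by omega) (by omega)
  have hfree := not_containsCopy_broom_of_degree_le ha (by omega) hdeg
  refine IsGreatest.csSup_eq ⟨⟨G, hconn, hfree, ?_⟩, ?_⟩
  · refine (le_antisymm (hupper G hconn hfree) ?_).symm
    rwa [← coe_edgeFinset, Set.ncard_coe_finset]
  · rintro _ ⟨G', hconn', hfree', rfl⟩
    exact hupper G' hconn' hfree'
end
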